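/- For the (1,4) spectral curve, define the free energies: F_0(λ,t) = −t⁶/972 + 2λt³/27 − 3λ²/4 + (λ²/4)·log(3λ²), F_1(λ) = −(1/12)·log λ, and for g ≥ 2, F_g(λ) = (B_{2g}/(2g(2g−2)))·λ^{2−2g}, regarded as real-analytic functions of λ > 0 (t ∈ ℝ a parameter); here B_n denotes the n-th Bernoulli number, defined by w/(e^w − 1) = ∑_{n≥0} B_n·w^n/n!. Then for all t ∈ ℝ and λ > 0: (i) F_0''(λ) = (1/2)·log(3λ²) (derivative in λ); and (ii) for every even integer k ≥ 2, ∑ (2/n!)·F_g^{(n)}(λ) = 0, where the sum is over all pairs (g, n) with g ≥ 0, n ≥ 2 even, and 2g − 2 + n = k. Equivalently, the formal series F(λ; ħ) = ∑_{g≥0} ħ^{2g−2}·F_g(λ) satisfies the three-term difference equation F(λ+ħ; ħ) − 2F(λ; ħ) + F(λ−ħ; ħ) = ∂²F_0/∂λ² upon Taylor-expanding each F_g(λ±ħ) in ħ. -/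

import Mathlib

/-- The free energies of the (1,4) spectral curve:
`F₀(λ,t) = −t⁶/972 + 2λt³/27 − 3λ²/4 + (λ²/4)·log(3λ²)`, `F₁(λ) = −(1/12)·log λ`, and
`F_g(λ) = (B_{2g}/(2g(2g−2)))·λ^{2−2g}` for `g ≥ 2`. -/
noncomputable def F14 (t : ℝ) : ℕ → ℝ → ℝ
  | 0 => fun l => -t ^ 6 / 972 + 2 * l * t ^ 3 / 27 - 3 * l ^ 2 / 4
      + l ^ 2 / 4 * Real.log (3 * l ^ 2)
  | 1 => fun l => -(1 / 12) * Real.log l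
  | (g + 2) => fun l =>
      ((bernoulli (2 * (g + 2)) : ℝ) / ((2 * (g + 2) : ℝ) * ((2 * (g + 2) : ℝ) - 2)))
        * l ^ ((2 : ℤ) - 2 * ((g : ℤ) + 2))

/-!
Two differentiations give `F₀'' = ½·log(3λ²)`, whose derivative is `1/λ`; `F₁' = −1/(12λ)`; and
`F_g` is a power of `λ` for `g ≥ 2`. Hence, when `2g − 2 + n = k` with `k ≥ 2` even, every term
`(2/n!)·F_g⁽ⁿ⁾(λ)` equals `2(k−1)!·λ^{−k}` times `(2g−1)·B_{2g}/((2g)!·n!)`. Multiplied by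
`(k+2)!`, the resulting sum is `∑_g (2g−1)·C(k+2, 2g)·B_{2g}`; this vanishes because
`(i−1)·C(N+1, i) = N·C(N+1, i) − (N+1)·C(N, i)`, the recursion `∑_{i<N} C(N, i)·B_i = 0`, and the
vanishing of the odd Bernoulli numbers beyond `B₁`.
-/

open Finset Real Filter Topology
open scoped Nat

theorem Finset.sum_range_two_mul {M : Type*} [AddCommMonoid M] (f : ℕ → M) (n : ℕ) :
    ∑ i ∈ range (2 * n), f i = ∑ i ∈ range n, (f (2 * i) + f (2 * i + 1)) := by
  induction n with
  | zero => simp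
  | succ n ih => rw [Nat.mul_succ, sum_range_succ, sum_range_succ, sum_range_succ, ih, add_assoc]

theorem sum_filter_two_mul_add_eq_sum_range {M : Type*} [AddCommMonoid M] (f : ℕ × ℕ → M)
    (m : ℕ) :
    ∑ p ∈ (range (2 * m + 3) ×ˢ range (2 * m + 3)).filter
        (fun p => 2 ≤ p.2 ∧ Even p.2 ∧ 2 * p.1 + p.2 = 2 * m + 2), f p
      = ∑ g ∈ range (m + 1), f (g, 2 * m + 2 - 2 * g) := by
  refine (sum_nbij' (fun g => (g, 2 * m + 2 - 2 * g)) Prod.fst ?_ ?_ ?_ ?_ fun _ _ => rfl).symm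
  · intro g hg
    simp only [mem_filter, mem_product, mem_range] at hg ⊢
    exact ⟨⟨by omega, by omega⟩, by omega, ⟨m + 1 - g, by omega⟩, by omega⟩
  · rintro ⟨g, n⟩ hp
    simp only [mem_filter, mem_product, mem_range] at hp ⊢
    obtain ⟨-, hn, -, hgn⟩ := hp
    omega
  · exact fun _ _ => rfl
  · rintro ⟨g, n⟩ hp
    simp only [mem_filter, mem_product, mem_range, Prod.mk.injEq, true_and] at hp ⊢
    obtain ⟨-, -, -, hgn⟩ := hp
    omega

theorem sum_range_sub_one_mul_choose_mul_bernoulli {N : ℕ} (hN : 2 ≤ N) :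
    ∑ i ∈ range (N + 1), ((i : ℚ) - 1) * (N + 1).choose i * bernoulli i
      = -(N + 1) * bernoulli N := by
  have hsplit : ∀ i ∈ range (N + 1), ((i : ℚ) - 1) * (N + 1).choose i * bernoulli i
      = N * ((N + 1).choose i * bernoulli i) - (N + 1) * (N.choose i * bernoulli i) := by
    intro i hi
    have h := congrArg (Nat.cast : ℕ → ℚ) (Nat.choose_mul_succ_eq N i)
    push_cast [Nat.cast_sub (mem_range.1 hi).le] at h
    linear_combination bernoulli i * h
  rw [sum_congr rfl hsplit, sum_sub_distrib, ← mul_sum, ← mul_sum, sum_bernoulli,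
    sum_range_succ, sum_bernoulli, Nat.choose_self]
  rw [if_neg (by omega), if_neg (by omega)]
  push_cast
  ring

theorem sum_range_two_mul_sub_one_mul_choose_mul_bernoulli (j : ℕ) :
    ∑ g ∈ range (j + 2), (2 * (g : ℚ) - 1) * (2 * j + 4).choose (2 * g) * bernoulli (2 * g)
      = 0 := by
  have h := sum_range_sub_one_mul_choose_mul_bernoulli (N := 2 * j + 3) (by omega)
  rw [show 2 * j + 3 + 1 = 2 * (j + 2) by ring, sum_range_two_mul,
    bernoulli_eq_zero_of_odd ⟨j + 1, by ring⟩ (by omega), mul_zero] at h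
  rw [← h, show 2 * j + 4 = 2 * (j + 2) by ring]
  refine sum_congr rfl fun g _ => ?_
  rcases g with _ | g
  · simp
  · rw [bernoulli_eq_zero_of_odd (odd_two_mul_add_one _) (by omega)]
    push_cast
    ring

theorem sum_range_two_mul_sub_one_mul_bernoulli_div_factorial {m : ℕ} (hm : m ≠ 0) :
    ∑ g ∈ range (m + 1),
        (2 * (g : ℝ) - 1) * bernoulli (2 * g) / ((2 * g)! * (2 * m + 2 - 2 * g)!) = 0 := by
  obtain ⟨j, rfl⟩ := Nat.exists_eq_succ_of_ne_zero hm
  have h := congrArg (fun q : ℚ => (q : ℝ) / (2 * j + 4)!)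
    (sum_range_two_mul_sub_one_mul_choose_mul_bernoulli j)
  simp only [Rat.cast_sum, sum_div, Rat.cast_zero, zero_div] at h
  rw [← h]
  refine sum_congr rfl fun g hg => ?_
  have hg : 2 * g ≤ 2 * j + 4 := by have := mem_range.1 hg; omega
  rw [show 2 * (j + 1) + 2 = 2 * j + 4 by ring]
  push_cast
  rw [Nat.cast_choose ℝ hg]
  field_simp

theorem iteratedDeriv_succ_eq_of_eventually_hasDerivAt {𝕜 F : Type*}
    [NontriviallyNormedField 𝕜] [NormedAddCommGroup F] [NormedSpace 𝕜 F] {f f' : 𝕜 → F} {x : 𝕜}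
    (h : ∀ᶠ y in 𝓝 x, HasDerivAt f (f' y) y) (n : ℕ) :
    iteratedDeriv (n + 1) f x = iteratedDeriv n f' x := by
  rw [iteratedDeriv_succ']
  exact Filter.EventuallyEq.iteratedDeriv_eq n (h.mono fun _ hy => hy.deriv)

theorem iteratedDeriv_zpow_neg_sub_one {𝕜 : Type*} [NontriviallyNormedField 𝕜] (a n : ℕ)
    (x : 𝕜) :
    iteratedDeriv n (fun y => y ^ (-(a : ℤ) - 1)) x
      = (-1) ^ n * (a + 1).ascFactorial n * x ^ (-(a : ℤ) - 1 - n) := by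
  have hprod : ∏ i ∈ range n, (((-(a : ℤ) - 1 : ℤ) : 𝕜) - i)
      = ∏ i ∈ range n, -((a + 1 + i : ℕ) : 𝕜) :=
    prod_congr rfl fun i _ => by push_cast; ring
  rw [iteratedDeriv_eq_iterate, iter_deriv_zpow, hprod, prod_neg, card_range,
    Nat.ascFactorial_eq_prod_range, Nat.cast_prod]

namespace F14

theorem hasDerivAt_log_three_mul_sq {x : ℝ} (hx : x ≠ 0) :
    HasDerivAt (fun y => log (3 * y ^ 2)) (2 / x) x := by
  refine (((hasDerivAt_pow 2 x).const_mul 3).log (by positivity)).congr_deriv ?_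
  field_simp
  norm_num
  ring

theorem hasDerivAt_zero (t : ℝ) {x : ℝ} (hx : x ≠ 0) :
    HasDerivAt (F14 t 0) (2 * t ^ 3 / 27 - x + x / 2 * log (3 * x ^ 2)) x := by
  have h := (((hasDerivAt_id x).const_mul 2).mul_const (t ^ 3)).div_const 27
    |>.const_add (-t ^ 6 / 972) |>.sub (((hasDerivAt_pow 2 x).const_mul 3).div_const 4)
    |>.add (((hasDerivAt_pow 2 x).div_const 4).mul (hasDerivAt_log_three_mul_sq hx))
  refine h.congr_deriv ?_
  field_simp
  norm_num
  ring

theorem hasDerivAt_deriv_zero (t : ℝ) {x : ℝ} (hx : x ≠ 0) :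
    HasDerivAt (fun y => 2 * t ^ 3 / 27 - y + y / 2 * log (3 * y ^ 2))
      (1 / 2 * log (3 * x ^ 2)) x := by
  have h := ((hasDerivAt_id x).const_sub (2 * t ^ 3 / 27)).add
    (((hasDerivAt_id x).div_const 2).mul (hasDerivAt_log_three_mul_sq hx))
  refine h.congr_deriv ?_
  field_simp
  norm_num

theorem iteratedDeriv_zero_add_two (t : ℝ) {l : ℝ} (hl : l ≠ 0) (n : ℕ) :
    iteratedDeriv (n + 2) (F14 t 0) l = iteratedDeriv n (fun y => 1 / 2 * log (3 * y ^ 2)) l := by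
  have h := eventually_ne_nhds hl
  rw [iteratedDeriv_succ_eq_of_eventually_hasDerivAt (h.mono fun _ => hasDerivAt_zero t),
    iteratedDeriv_succ_eq_of_eventually_hasDerivAt (h.mono fun _ => hasDerivAt_deriv_zero t)]

theorem deriv_deriv_zero (t : ℝ) {l : ℝ} (hl : l ≠ 0) :
    deriv (deriv (F14 t 0)) l = 1 / 2 * log (3 * l ^ 2) := by
  simpa [iteratedDeriv_succ] using iteratedDeriv_zero_add_two t hl 0

theorem iteratedDeriv_zero_add_three (t : ℝ) {l : ℝ} (hl : l ≠ 0) (n : ℕ) :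
    iteratedDeriv (n + 3) (F14 t 0) l = (-1) ^ n * n ! * l ^ (-1 - n : ℤ) := by
  have h : ∀ᶠ y in 𝓝 l, HasDerivAt (fun y => 1 / 2 * log (3 * y ^ 2)) y⁻¹ y :=
    (eventually_ne_nhds hl).mono fun y hy => by
      refine ((hasDerivAt_log_three_mul_sq hy).const_mul (1 / 2)).congr_deriv ?_
      field_simp
  rw [iteratedDeriv_zero_add_two t hl, iteratedDeriv_succ_eq_of_eventually_hasDerivAt h,
    iteratedDeriv_eq_iterate, iter_deriv_inv]

theorem iteratedDeriv_one_add_one (t l : ℝ) (n : ℕ) :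
    iteratedDeriv (n + 1) (F14 t 1) l = -(1 / 12) * ((-1) ^ n * n ! * l ^ (-1 - n : ℤ)) := by
  rw [F14, iteratedDeriv_const_mul_field, iteratedDeriv_succ', deriv_log',
    iteratedDeriv_eq_iterate, iter_deriv_inv]

theorem iteratedDeriv_add_two (t l : ℝ) (g n : ℕ) :
    iteratedDeriv n (F14 t (g + 2)) l
      = (bernoulli (2 * (g + 2)) : ℝ) / ((2 * (g + 2) : ℝ) * ((2 * (g + 2) : ℝ) - 2))
        * ((-1) ^ n * (2 * g + 2).ascFactorial n * l ^ (-((2 * g + 1 : ℕ) : ℤ) - 1 - n)) := by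
  have h : (2 : ℤ) - 2 * ((g : ℤ) + 2) = -((2 * g + 1 : ℕ) : ℤ) - 1 := by push_cast; ring
  rw [F14, iteratedDeriv_const_mul_field, h, iteratedDeriv_zpow_neg_sub_one]

theorem two_div_factorial_mul_iteratedDeriv (t : ℝ) {l : ℝ} (hl : l ≠ 0) {m g n : ℕ}
    (hm : m ≠ 0) (h : 2 * g + n = 2 * m + 2) :
    2 / (n ! : ℝ) * iteratedDeriv n (F14 t g) l
      = 2 * (2 * m - 1)! * l ^ (-(2 * m : ℤ))
        * ((2 * g - 1) * bernoulli (2 * g) / ((2 * g)! * n !)) := by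
  obtain ⟨j, rfl⟩ := Nat.exists_eq_succ_of_ne_zero hm
  rw [show 2 * (j + 1) - 1 = 2 * j + 1 by omega,
    show -(2 * ((j + 1 : ℕ) : ℤ)) = -1 - ((2 * j + 1 : ℕ) : ℤ) by push_cast; ring]
  rcases g with _ | _ | g
  · obtain rfl : n = 2 * j + 1 + 3 := by omega
    rw [iteratedDeriv_zero_add_three t hl, (odd_two_mul_add_one j).neg_one_pow, Nat.mul_zero,
      bernoulli_zero, Nat.factorial_zero]
    push_cast
    field_simp
    ring
  · obtain rfl : n = 2 * j + 1 + 1 := by omega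
    rw [iteratedDeriv_one_add_one, (odd_two_mul_add_one j).neg_one_pow, bernoulli_two,
      Nat.factorial_succ (2 * j + 1)]
    push_cast
    field_simp
    ring
  · obtain ⟨d, rfl⟩ : ∃ d, n = 2 * d := ⟨j - g, by omega⟩
    have hasc : ((2 * g + 1)! : ℝ) * (2 * g + 2).ascFactorial (2 * d) = (2 * j + 1)! := by
      rw [← Nat.cast_mul, Nat.factorial_mul_ascFactorial,
        show 2 * g + 1 + 2 * d = 2 * j + 1 by omega]
    have hfac : ((2 * (g + 2))! : ℝ) = (2 * g + 4) * (2 * g + 3) * (2 * g + 2) * (2 * g + 1)! := by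
      rw [show 2 * (g + 2) = 2 * g + 1 + 1 + 1 + 1 by ring, Nat.factorial_succ,
        Nat.factorial_succ, Nat.factorial_succ]
      push_cast
      ring
    rw [iteratedDeriv_add_two, (even_two_mul d).neg_one_pow, ← hasc, hfac,
      show -((2 * g + 1 : ℕ) : ℤ) - 1 - (2 * d : ℕ) = -1 - (2 * j + 1 : ℕ) by omega]
    push_cast
    rw [show 2 * ((g : ℝ) + 2) - 2 = 2 * g + 2 by ring]
    field_simp
    ring

end F14

/-- For all `t ∈ ℝ` and `λ > 0`:
(i) `F₀''(λ) = (1/2)·log(3λ²)`; and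
(ii) for every even `k ≥ 2`,
`∑_{(g,n) : g ≥ 0, n ≥ 2 even, 2g−2+n = k} (2/n!)·F_g⁽ⁿ⁾(λ) = 0`,
i.e. the series `F(λ;ℏ) = ∑_g ℏ^{2g−2} F_g(λ)` satisfies the three-term difference
equation `F(λ+ℏ) − 2F(λ) + F(λ−ℏ) = ∂²F₀/∂λ²` upon Taylor expansion in `ℏ`. -/
theorem free_energy_three_term_14 (t l : ℝ) (hl : 0 < l) :
    deriv (deriv (F14 t 0)) l = (1 / 2) * Real.log (3 * l ^ 2)
    ∧ ∀ k : ℕ, Even k → 2 ≤ k →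
        ∑ p ∈ (Finset.range (k + 3) ×ˢ Finset.range (k + 3)).filter
            (fun p => 2 ≤ p.2 ∧ Even p.2 ∧ 2 * p.1 + p.2 = k + 2),
          (2 / (p.2.factorial : ℝ)) * iteratedDeriv p.2 (F14 t p.1) l = 0 := by
  refine ⟨F14.deriv_deriv_zero t hl.ne', fun k hk hk2 => ?_⟩
  obtain ⟨m, rfl⟩ := hk.two_dvd
  have hm : m ≠ 0 := by omega
  rw [sum_filter_two_mul_add_eq_sum_range,
    sum_congr rfl fun g hg => F14.two_div_factorial_mul_iteratedDeriv t hl.ne' hm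
      (by have := mem_range.1 hg; omega),
    ← mul_sum, sum_range_two_mul_sub_one_mul_bernoulli_div_factorial hm, mul_zero]
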